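/- arXiv:1711.10331 — 6 statements merged into one kernel-verified Lean document; each statement's English description precedes it below -/
import Mathlib

section
/- Let H be a real inner product space, let A, B : H → ℝ be convex differentiable functions, and let λ > 0. If f minimizes g ↦ A(g) + (λ/2)‖g‖² over H and f′ minimizes g ↦ B(g) + (λ/2)‖g‖² over H, then λ‖f − f′‖² ≤ (A(f′) − A(f)) + (B(f) − B(f′)). -/
open Set Filter Topology

/-! Adding `(λ/2)‖·‖²` to a convex function makes it `λ`-strongly convex, and a minimizer `x` of an
`m`-strongly convex function `G` has quadratic growth: `G x + (m/2)‖y - x‖² ≤ G y`. Applying this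
to the two regularized objectives, once at `f'` and once at `f`, and adding the two inequalities
cancels the regularizers and leaves the claim. -/

section NormedSpace

variable {E : Type*} [NormedAddCommGroup E] [NormedSpace ℝ E]

theorem StrongConvexOn.add_sq_norm_sub_le_of_isMinOn {s : Set E} {m : ℝ} {G : E → ℝ} {x y : E}
    (hG : StrongConvexOn s m G) (hmin : IsMinOn G s x) (hx : x ∈ s) (hy : y ∈ s) :
    G x + m / 2 * ‖y - x‖ ^ 2 ≤ G y := by
  have h_near : ∀ t ∈ Ioo (0 : ℝ) 1, G x + (1 - t) * (m / 2 * ‖y - x‖ ^ 2) ≤ G y := by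
    rintro t ⟨ht₀, ht₁⟩
    have h_seg := hG.2 hx hy (sub_nonneg.2 ht₁.le) ht₀.le (sub_add_cancel 1 t)
    have h_le := hmin (hG.1 hx hy (sub_nonneg.2 ht₁.le) ht₀.le (sub_add_cancel 1 t))
    rw [norm_sub_rev] at h_seg
    simp only [smul_eq_mul, mem_ofPred_eq] at h_seg h_le
    refine le_of_mul_le_mul_left ?_ ht₀
    linarith
  have h_lim : Tendsto (fun t : ℝ ↦ G x + (1 - t) * (m / 2 * ‖y - x‖ ^ 2)) (𝓝[>] 0)
      (𝓝 (G x + m / 2 * ‖y - x‖ ^ 2)) :=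
    tendsto_nhdsWithin_of_tendsto_nhds <| Continuous.tendsto' (by fun_prop) _ _ (by simp)
  exact le_of_tendsto h_lim (eventually_of_mem (Ioo_mem_nhdsGT one_pos) h_near)

end NormedSpace

section InnerProductSpace

variable {E : Type*} [NormedAddCommGroup E] [InnerProductSpace ℝ E]

theorem ConvexOn.strongConvexOn_add_sq_norm {s : Set E} {A : E → ℝ} (hA : ConvexOn ℝ s A) (m : ℝ) :
    StrongConvexOn s m fun x ↦ A x + m / 2 * ‖x‖ ^ 2 := by
  rw [strongConvexOn_iff_convex]
  simpa only [add_sub_cancel_right] using hA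

end InnerProductSpace

theorem l2_regularized_minimizers_stability_general
    {H : Type*} [NormedAddCommGroup H] [InnerProductSpace ℝ H]
    (A B : H → ℝ)
    (hAconv : ConvexOn ℝ univ A)
    (hBconv : ConvexOn ℝ univ B)
    (lam : ℝ)
    (f f' : H)
    (hf : ∀ g : H, A f + lam / 2 * ‖f‖ ^ 2 ≤ A g + lam / 2 * ‖g‖ ^ 2)
    (hf' : ∀ g : H, B f' + lam / 2 * ‖f'‖ ^ 2 ≤ B g + lam / 2 * ‖g‖ ^ 2) :
    lam * ‖f - f'‖ ^ 2 ≤ (A f' - A f) + (B f - B f') := by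
  have hA := (hAconv.strongConvexOn_add_sq_norm lam).add_sq_norm_sub_le_of_isMinOn
    (fun g _ ↦ hf g) (mem_univ f) (mem_univ f')
  have hB := (hBconv.strongConvexOn_add_sq_norm lam).add_sq_norm_sub_le_of_isMinOn
    (fun g _ ↦ hf' g) (mem_univ f') (mem_univ f)
  rw [norm_sub_rev] at hA
  linarith

/-- **Key stability inequality for L2-regularized minimizers.**
Let `H` be a real inner product space, `A B : H → ℝ` convex differentiable,
and `λ > 0`. If `f` minimizes `g ↦ A g + (λ/2)‖g‖²` over `H` and `f'`
minimizes `g ↦ B g + (λ/2)‖g‖²` over `H`, then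
`λ‖f − f'‖² ≤ (A f' − A f) + (B f − B f')`. -/
theorem l2_regularized_minimizers_stability
    {H : Type*} [NormedAddCommGroup H] [InnerProductSpace ℝ H]
    (A B : H → ℝ)
    (hAconv : ConvexOn ℝ univ A) (hAdiff : Differentiable ℝ A)
    (hBconv : ConvexOn ℝ univ B) (hBdiff : Differentiable ℝ B)
    (lam : ℝ) (hlam : 0 < lam)
    (f f' : H)
    (hf : ∀ g : H, A f + lam / 2 * ‖f‖ ^ 2 ≤ A g + lam / 2 * ‖g‖ ^ 2)
    (hf' : ∀ g : H, B f' + lam / 2 * ‖f'‖ ^ 2 ≤ B g + lam / 2 * ‖g‖ ^ 2) :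
    lam * ‖f - f'‖ ^ 2 ≤ (A f' - A f) + (B f - B f') :=
  l2_regularized_minimizers_stability_general A B hAconv hBconv lam f f' hf hf'
end

section
/- Under the L2-regularized structured prediction setting with structural complexity regularization strength α (f minimizing the full objective, f^{∖i′} minimizing the objective with one mini-sample loss omitted, all loss terms convex differentiable, the removed loss being a sum of n/α τ-Lipschitz compositions of ρ-admissible evaluation functionals, mini-sample feature norm bounded by nv√d/α and full-sample feature norm bounded by nv√d), if moreover the point-wise loss at any test position is ℓ_τ(g, z, k) = c_τ(E_{x,k}(g), y_(k)) with c_τ τ-smooth and E_{x,k} ρ-admissible at x, then the loss stability is bounded by dτ²ρ²v²n²/(mλα²), i.e. |ℓ_τ(f, z, k) − ℓ_τ(f^{∖i′}, z, k)| ≤ dτ²ρ²v²n²/(mλα²) for all z and k, and the sample loss stability is bounded by dτ²ρ²v²n³/(mλα²), i.e. |L_τ(f, z) − L_τ(f^{∖i′}, z)| ≤ dτ²ρ²v²n³/(mλα²) for all z. -/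
/-!
The regularized objective `C + λ/2 ‖·‖²` with `C` convex is `λ`-strongly convex, so its
minimizer beats every competitor `g` by at least `λ/2 ‖g - f‖²`. Applying this to the full and
to the reduced objective and adding the two inequalities, everything cancels except the removed
mini-sample loss: `λ ‖f - f'‖² ≤ (L f' - L f) / (m n)`. That loss is a sum of `n / α` terms,
each `τ ρ ‖x'‖`-Lipschitz in the hypothesis, whence `‖f - f'‖ ≤ τ ρ ‖x'‖ / (m λ α)`.
Admissibility of the test evaluation functionals and smoothness of the cost turn this into the
loss bounds, with `‖x'‖ ≤ n v √d / α` and `‖x‖ ≤ n v √d`.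
-/

open Set Finset Filter Topology

theorem convexOn_finset_sum {𝕜 E β ι : Type*} [Semiring 𝕜] [PartialOrder 𝕜]
    [AddCommMonoid E] [SMul 𝕜 E] [AddCommMonoid β] [PartialOrder β] [IsOrderedAddMonoid β]
    [Module 𝕜 β] {s : Set E} (hs : Convex 𝕜 s) (t : Finset ι) {f : ι → E → β}
    (hf : ∀ i ∈ t, ConvexOn 𝕜 s (f i)) :
    ConvexOn 𝕜 s fun x ↦ ∑ i ∈ t, f i x := by
  classical
  induction t using Finset.induction with
  | empty => simpa using convexOn_const (0 : β) hs
  | insert a t ha ih =>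
    simp only [Finset.sum_insert ha]
    exact (hf a (mem_insert_self a t)).add (ih fun i hi ↦ hf i (mem_insert_of_mem hi))

theorem abs_sum_sub_sum_le_card_mul {ι : Type*} (s : Finset ι) {a b : ι → ℝ} {B : ℝ}
    (h : ∀ i ∈ s, |a i - b i| ≤ B) :
    |∑ i ∈ s, a i - ∑ i ∈ s, b i| ≤ s.card * B := by
  simpa [Real.dist_eq] using
    dist_sum_sum_le_of_le s (f := a) (a := b) (d := fun _ ↦ B) (by simpa [Real.dist_eq])

theorem abs_comp_sub_comp_le {c : ℝ → ℝ} {τ a b B : ℝ} (hτ : 0 ≤ τ)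
    (hc : ∀ a b, |c a - c b| ≤ τ * |a - b|) (h : |a - b| ≤ B) :
    |c a - c b| ≤ τ * B :=
  (hc a b).trans (mul_le_mul_of_nonneg_left h hτ)

section StrongConvexity

variable {E : Type*} [NormedAddCommGroup E]

theorem StrongConvexOn.add_mul_norm_sub_sq_le_of_isMinOn [NormedSpace ℝ E] {s : Set E} {m : ℝ}
    {F : E → ℝ} (hF : StrongConvexOn s m F) {x : E} (hx : x ∈ s) (hmin : IsMinOn F s x)
    {y : E} (hy : y ∈ s) :
    F x + m / 2 * ‖y - x‖ ^ 2 ≤ F y := by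
  have hsegment : ∀ t ∈ Ioo (0 : ℝ) 1, F x + (1 - t) * (m / 2 * ‖y - x‖ ^ 2) ≤ F y := by
    rintro t ⟨ht0, ht1⟩
    have hconv := hF.2 hy hx ht0.le (sub_nonneg.2 ht1.le) (add_sub_cancel t 1)
    have hmin_t : F x ≤ F (t • y + (1 - t) • x) :=
      hmin (hF.1 hy hx ht0.le (sub_nonneg.2 ht1.le) (add_sub_cancel t 1))
    rw [smul_eq_mul, smul_eq_mul] at hconv
    have : t * (F x + (1 - t) * (m / 2 * ‖y - x‖ ^ 2)) ≤ t * F y := by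
      linear_combination hmin_t + hconv
    exact le_of_mul_le_mul_left this ht0
  have hlim : Tendsto (fun t : ℝ ↦ F x + (1 - t) * (m / 2 * ‖y - x‖ ^ 2)) (𝓝[>] 0)
      (𝓝 (F x + (1 - 0) * (m / 2 * ‖y - x‖ ^ 2))) :=
    (Continuous.tendsto (by fun_prop) 0).mono_left nhdsWithin_le_nhds
  simpa using le_of_tendsto hlim (eventually_of_mem (Ioo_mem_nhdsGT one_pos) hsegment)

variable [InnerProductSpace ℝ E]

theorem ConvexOn.strongConvexOn_add_mul_norm_sq {s : Set E} {C : E → ℝ} (hC : ConvexOn ℝ s C)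
    (m : ℝ) : StrongConvexOn s m fun x ↦ C x + m / 2 * ‖x‖ ^ 2 :=
  strongConvexOn_iff_convex.2 (by simpa using hC)

theorem norm_sub_le_of_isMinOn_regularized {C D : E → ℝ} (hC : ConvexOn ℝ univ C)
    (hD : ConvexOn ℝ univ D) {lam K : ℝ} (hlam : 0 < lam) (hK : 0 ≤ K)
    (hDlip : ∀ g g', |D g - D g'| ≤ K * ‖g - g'‖) {f f' : E}
    (hf : IsMinOn (fun g ↦ C g + D g + lam / 2 * ‖g‖ ^ 2) univ f)
    (hf' : IsMinOn (fun g ↦ C g + lam / 2 * ‖g‖ ^ 2) univ f') :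
    ‖f - f'‖ ≤ K / lam := by
  have hgrowth := ((hC.add hD).strongConvexOn_add_mul_norm_sq lam)
    |>.add_mul_norm_sub_sq_le_of_isMinOn (mem_univ f) hf (mem_univ f')
  have hgrowth' := (hC.strongConvexOn_add_mul_norm_sq lam)
    |>.add_mul_norm_sub_sq_le_of_isMinOn (mem_univ f') hf' (mem_univ f)
  simp only [Pi.add_apply, norm_sub_rev f' f] at hgrowth hgrowth'
  -- adding `hgrowth` and `hgrowth'`, everything except `D f' - D f` cancels
  have hDdiff := le_of_abs_le (hDlip f' f)
  rw [norm_sub_rev] at hDdiff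
  have hsq : lam * ‖f - f'‖ * ‖f - f'‖ ≤ K * ‖f - f'‖ := by linarith
  rw [le_div_iff₀ hlam]
  rcases (norm_nonneg (f - f')).eq_or_lt with h0 | hpos
  · simpa [← h0] using hK
  · linarith [le_of_mul_le_mul_right hsq hpos]

theorem norm_sub_le_of_isMinOn_sum_erase {ι : Type*} [Fintype ι] [DecidableEq ι]
    {L : ι → E → ℝ} (hL : ∀ j, ConvexOn ℝ univ (L j)) {N lam K : ℝ} (hN : 0 ≤ N)
    (hlam : 0 < lam) (hK : 0 ≤ K) (i : ι) (hLlip : ∀ g g', |L i g - L i g'| ≤ K * ‖g - g'‖)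
    {f f' : E} (hf : ∀ g, N * ∑ j, L j f + lam / 2 * ‖f‖ ^ 2 ≤ N * ∑ j, L j g + lam / 2 * ‖g‖ ^ 2)
    (hf' : ∀ g, N * ∑ j ∈ univ.erase i, L j f' + lam / 2 * ‖f'‖ ^ 2
      ≤ N * ∑ j ∈ univ.erase i, L j g + lam / 2 * ‖g‖ ^ 2) :
    ‖f - f'‖ ≤ N * K / lam := by
  have hsplit : ∀ g, N * ∑ j, L j g = N * ∑ j ∈ univ.erase i, L j g + N * L i g := fun g ↦ by
    rw [← mul_add, sum_erase_add _ _ (mem_univ i)]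
  refine norm_sub_le_of_isMinOn_regularized (C := fun g ↦ N * ∑ j ∈ univ.erase i, L j g)
    (D := fun g ↦ N * L i g) ((convexOn_finset_sum convex_univ _ fun j _ ↦ hL j).smul hN)
    ((hL i).smul hN) hlam (by positivity) (fun g g' ↦ ?_)
    (fun g _ ↦ by simpa [hsplit] using hf g) (fun g _ ↦ hf' g)
  rw [← mul_sub, abs_mul, abs_of_nonneg hN, mul_assoc]
  exact mul_le_mul_of_nonneg_left (hLlip g g') hN

end StrongConvexity

theorem loss_stability_structural_regularization_general
    {H : Type*} [NormedAddCommGroup H] [InnerProductSpace ℝ H]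
    {Zt Ytag : Type*}     -- test samples and gold tags
    (m n α d : ℕ) (hm : 0 < m) (hn : 0 < n) (hα : 0 < α) (hdvd : α ∣ n)
    (L : Fin (m * α) → H → ℝ)
    (hconv : ∀ j, ConvexOn ℝ univ (L j))
    (lam : ℝ) (hlam : 0 < lam)
    (i' : Fin (m * α)) (f f' : H)
    (hf : ∀ g : H,
      (1 / ((m : ℝ) * n)) * ∑ j, L j f + lam / 2 * ‖f‖ ^ 2
        ≤ (1 / ((m : ℝ) * n)) * ∑ j, L j g + lam / 2 * ‖g‖ ^ 2)
    (hf' : ∀ g : H,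
      (1 / ((m : ℝ) * n)) * ∑ j ∈ univ.erase i', L j f' + lam / 2 * ‖f'‖ ^ 2
        ≤ (1 / ((m : ℝ) * n)) * ∑ j ∈ univ.erase i', L j g + lam / 2 * ‖g‖ ^ 2)
    (τ ρ v xnorm : ℝ) (hτ : 0 ≤ τ) (hρ : 0 ≤ ρ) (hv : 0 ≤ v) (hx : 0 ≤ xnorm)
    (c : Fin (n / α) → ℝ → ℝ) (E : Fin (n / α) → H → ℝ)
    (hdecomp : ∀ g : H, L i' g = ∑ k, c k (E k g))
    (hlip : ∀ (k : Fin (n / α)) (a b : ℝ), |c k a - c k b| ≤ τ * |a - b|)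
    (hadm : ∀ (k : Fin (n / α)) (g g' : H),
      |E k g - E k g'| ≤ ρ * ‖g - g'‖ * xnorm)
    (hxbound : xnorm ≤ (n : ℝ) * v * Real.sqrt d / α)
    -- the point-wise loss at a test sample `z` and position `k` is
    -- `ℓ(g, z, k) = cτ (Ev z k g) (y z k)` with `cτ` τ-smooth and `Ev z k`
    -- ρ-admissible at the test input `x_z`, whose norm `xn z` is at most `n v √d`
    (Ev : Zt → Fin n → H → ℝ) (y : Zt → Fin n → Ytag)
    (cτ : ℝ → Ytag → ℝ)
    (hsmooth : ∀ (a b : ℝ) (t : Ytag), |cτ a t - cτ b t| ≤ τ * |a - b|)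
    (xn : Zt → ℝ) (hxn0 : ∀ z, 0 ≤ xn z)
    (hxnb : ∀ z, xn z ≤ (n : ℝ) * v * Real.sqrt d)
    (hadmEv : ∀ (z : Zt) (k : Fin n) (g g' : H),
      |Ev z k g - Ev z k g'| ≤ ρ * ‖g - g'‖ * xn z) :
    (∀ (z : Zt) (k : Fin n),
      |cτ (Ev z k f) (y z k) - cτ (Ev z k f') (y z k)|
        ≤ (d : ℝ) * τ ^ 2 * ρ ^ 2 * v ^ 2 * n ^ 2 / ((m : ℝ) * lam * α ^ 2)) ∧
    (∀ z : Zt,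
      |(∑ k : Fin n, cτ (Ev z k f) (y z k)) - ∑ k : Fin n, cτ (Ev z k f') (y z k)|
        ≤ (d : ℝ) * τ ^ 2 * ρ ^ 2 * v ^ 2 * n ^ 3 / ((m : ℝ) * lam * α ^ 2)) := by
  have hm' : (0 : ℝ) < m := by exact_mod_cast hm
  have hn' : (0 : ℝ) < n := by exact_mod_cast hn
  have hα' : (0 : ℝ) < α := by exact_mod_cast hα
  have hLlip : ∀ g g', |L i' g - L i' g'| ≤ n / α * (τ * ρ * xnorm) * ‖g - g'‖ := fun g g' ↦ by
    rw [hdecomp, hdecomp, ← Nat.cast_div hdvd hα'.ne']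
    refine (abs_sum_sub_sum_le_card_mul univ fun k _ ↦
      abs_comp_sub_comp_le hτ (hlip k) (hadm k g g')).trans_eq ?_
    simp only [card_univ, Fintype.card_fin]
    ring
  set X : ℝ := n * v * Real.sqrt d
  have hnorm : ‖f - f'‖ ≤ τ * ρ * X / (m * lam * α ^ 2) :=
    calc ‖f - f'‖ ≤ 1 / (m * n) * (n / α * (τ * ρ * xnorm)) / lam :=
          norm_sub_le_of_isMinOn_sum_erase hconv (by positivity) hlam (by positivity) i' hLlip
            hf hf'
      _ ≤ 1 / (m * n) * (n / α * (τ * ρ * (X / α))) / lam := by gcongr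
      _ = τ * ρ * X / (m * lam * α ^ 2) := by field_simp
  have hpoint : ∀ z k, |cτ (Ev z k f) (y z k) - cτ (Ev z k f') (y z k)|
      ≤ (d : ℝ) * τ ^ 2 * ρ ^ 2 * v ^ 2 * n ^ 2 / ((m : ℝ) * lam * α ^ 2) := fun z k ↦
    calc _ ≤ τ * (ρ * ‖f - f'‖ * xn z) := abs_comp_sub_comp_le hτ (hsmooth · · _) (hadmEv z k f f')
      _ ≤ τ * (ρ * (τ * ρ * X / (m * lam * α ^ 2)) * X) := by
          gcongr
          exacts [hxn0 z, hxnb z]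
      _ = _ := by
          simp only [X]
          field_simp
          rw [Real.sq_sqrt d.cast_nonneg]
  refine ⟨hpoint, fun z ↦ (abs_sum_sub_sum_le_card_mul univ fun k _ ↦ hpoint z k).trans_eq ?_⟩
  simp only [card_univ, Fintype.card_fin]
  ring

/-- **Loss stability and sample loss stability vs. structural complexity
regularization.**  Under the L2-regularized structured prediction setting with
structural complexity regularization strength `α`, the loss stability of the
minimizer under removal of one mini-sample is bounded by
`d τ² ρ² v² n² / (m λ α²)` and the sample loss stability by
`d τ² ρ² v² n³ / (m λ α²)`. -/
theorem loss_stability_structural_regularization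
    {H : Type*} [NormedAddCommGroup H] [InnerProductSpace ℝ H]
    {Zt Ytag : Type*}     -- test samples and gold tags
    (m n α d : ℕ) (hm : 0 < m) (hn : 0 < n) (hα : 0 < α) (hdvd : α ∣ n)
    (L : Fin (m * α) → H → ℝ)
    (hconv : ∀ j, ConvexOn ℝ univ (L j))
    (hdiff : ∀ j, Differentiable ℝ (L j))
    (lam : ℝ) (hlam : 0 < lam)
    (i' : Fin (m * α)) (f f' : H)
    (hf : ∀ g : H,
      (1 / ((m : ℝ) * n)) * ∑ j, L j f + lam / 2 * ‖f‖ ^ 2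
        ≤ (1 / ((m : ℝ) * n)) * ∑ j, L j g + lam / 2 * ‖g‖ ^ 2)
    (hf' : ∀ g : H,
      (1 / ((m : ℝ) * n)) * ∑ j ∈ univ.erase i', L j f' + lam / 2 * ‖f'‖ ^ 2
        ≤ (1 / ((m : ℝ) * n)) * ∑ j ∈ univ.erase i', L j g + lam / 2 * ‖g‖ ^ 2)
    (τ ρ v xnorm : ℝ) (hτ : 0 ≤ τ) (hρ : 0 ≤ ρ) (hv : 0 ≤ v) (hx : 0 ≤ xnorm)
    (c : Fin (n / α) → ℝ → ℝ) (E : Fin (n / α) → H → ℝ)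
    (hdecomp : ∀ g : H, L i' g = ∑ k, c k (E k g))
    (hlip : ∀ (k : Fin (n / α)) (a b : ℝ), |c k a - c k b| ≤ τ * |a - b|)
    (hadm : ∀ (k : Fin (n / α)) (g g' : H),
      |E k g - E k g'| ≤ ρ * ‖g - g'‖ * xnorm)
    (hxbound : xnorm ≤ (n : ℝ) * v * Real.sqrt d / α)
    -- the point-wise loss at a test sample `z` and position `k` is
    -- `ℓ(g, z, k) = cτ (Ev z k g) (y z k)` with `cτ` τ-smooth and `Ev z k`
    -- ρ-admissible at the test input `x_z`, whose norm `xn z` is at most `n v √d`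
    (Ev : Zt → Fin n → H → ℝ) (y : Zt → Fin n → Ytag)
    (cτ : ℝ → Ytag → ℝ)
    (hsmooth : ∀ (a b : ℝ) (t : Ytag), |cτ a t - cτ b t| ≤ τ * |a - b|)
    (xn : Zt → ℝ) (hxn0 : ∀ z, 0 ≤ xn z)
    (hxnb : ∀ z, xn z ≤ (n : ℝ) * v * Real.sqrt d)
    (hadmEv : ∀ (z : Zt) (k : Fin n) (g g' : H),
      |Ev z k g - Ev z k g'| ≤ ρ * ‖g - g'‖ * xn z) :
    (∀ (z : Zt) (k : Fin n),
      |cτ (Ev z k f) (y z k) - cτ (Ev z k f') (y z k)|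
        ≤ (d : ℝ) * τ ^ 2 * ρ ^ 2 * v ^ 2 * n ^ 2 / ((m : ℝ) * lam * α ^ 2)) ∧
    (∀ z : Zt,
      |(∑ k : Fin n, cτ (Ev z k f) (y z k)) - ∑ k : Fin n, cτ (Ev z k f') (y z k)|
        ≤ (d : ℝ) * τ ^ 2 * ρ ^ 2 * v ^ 2 * n ^ 3 / ((m : ℝ) * lam * α ^ 2)) :=
  loss_stability_structural_regularization_general m n α d hm hn hα hdvd L hconv lam hlam i' f f' hf
    hf' τ ρ v xnorm hτ hρ hv hx c E hdecomp hlip hadm hxbound Ev y cτ hsmooth xn hxn0 hxnb hadmEv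
end

section
/- Suppose the point-wise cost c_τ is τ-smooth, the point-wise loss satisfies 0 ≤ ℓ_τ(g, z, k) ≤ γ for all trained functions g, samples z, and positions k, and the algorithm has removal-based function stability Δ̄: |G_{S′}(x, k) − G_{S′∖i}(x, k)| ≤ Δ̄ for every training set S′ (including replaced training sets), every sample, and every position. Let f = G_S, f^i = G_{S^i}, and let R_e(f) = (1/(mn)) Σ_{j=1}^m L_τ(f, z_j) and R_e(f)^i = (1/(mn))[Σ_{j≠i} L_τ(f^i, z_j) + L_τ(f^i, ẑ_i)] be the empirical risks before and after replacing the i-th sample z_i by ẑ_i. Then |R_e(f) − R_e(f)^i| ≤ (2(m−1)τΔ̄ + γ)/m. -/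
open Finset


lemma erase_ofFn_update {Z : Type*} {m : ℕ} (S : Fin m → Z) (i : Fin m) (zhat : Z) :
    (List.ofFn S).eraseIdx i = (List.ofFn (Function.update S i zhat)).eraseIdx i := by
  apply List.ext_getElem
  · simp [List.length_eraseIdx]
  · intro j h1 h2
    rw [List.getElem_eraseIdx, List.getElem_eraseIdx]
    have hl : (List.ofFn S).length = m := by simp
    split
    · next h' =>
      simp only [List.getElem_ofFn]
      rw [Function.update_of_ne]
      intro hc
      have := congrArg Fin.val hc
      simp at this
      omega
    · next h' =>
      simp only [List.getElem_ofFn]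
      rw [Function.update_of_ne]
      intro hc
      have := congrArg Fin.val hc
      simp at this
      omega


/-- **Empirical risk change under replacement of one training sample.**
If the point-wise cost `c` is τ-smooth, the point-wise loss is in `[0, γ]` for
all trained functions, and the algorithm `G` has removal-based function
stability `Δ̄` (for every training set, including replaced ones), then the
empirical risks before and after replacing the `i`-th training sample `S i`
with `ẑ` satisfy `|R_e(f) − R_e(f)^i| ≤ (2(m−1)τΔ̄ + γ)/m`. -/
theorem empirical_risk_replacement_stability
    {Z Ytag : Type*} (m n : ℕ) (hm : 0 < m) (hn : 0 < n)
    (G : List Z → Z → Fin n → ℝ)   -- learning algorithm on training lists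
    (y : Z → Fin n → Ytag)          -- gold tags of a sample
    (c : ℝ → Ytag → ℝ) (τ γ Δ : ℝ) (hτ : 0 ≤ τ)
    (hsmooth : ∀ (a b : ℝ) (t : Ytag), |c a t - c b t| ≤ τ * |a - b|)
    (hbound : ∀ (S' : List Z) (z : Z) (k : Fin n),
      0 ≤ c (G S' z k) (y z k) ∧ c (G S' z k) (y z k) ≤ γ)
    (hstab : ∀ (S' : List Z) (i : ℕ) (z : Z) (k : Fin n),
      |G S' z k - G (S'.eraseIdx i) z k| ≤ Δ)
    (S : Fin m → Z) (i : Fin m) (zhat : Z) :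
    |(1 / ((m : ℝ) * n)) *
        ∑ j : Fin m, ∑ k : Fin n, c (G (List.ofFn S) (S j) k) (y (S j) k)
      - (1 / ((m : ℝ) * n)) *
        ((∑ j ∈ univ.erase i, ∑ k : Fin n,
            c (G (List.ofFn (Function.update S i zhat)) (S j) k) (y (S j) k))
          + ∑ k : Fin n,
            c (G (List.ofFn (Function.update S i zhat)) zhat k) (y zhat k))|
      ≤ (2 * ((m : ℝ) - 1) * τ * Δ + γ) / m := by
  set A := List.ofFn S with hA
  set B := List.ofFn (Function.update S i zhat) with hB
  have hΔ0 : 0 ≤ Δ := le_trans (abs_nonneg _) (hstab A i (S i) ⟨0, hn⟩)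
  have hγ0 : 0 ≤ γ := le_trans (hbound A (S i) ⟨0, hn⟩).1 (hbound A (S i) ⟨0, hn⟩).2
  -- key: |G A z k - G B z k| ≤ 2Δ
  have key : ∀ (z : Z) (k : Fin n), |G A z k - G B z k| ≤ 2 * Δ := by
    intro z k
    have h1 := hstab A i z k
    have h2 := hstab B i z k
    have he : A.eraseIdx i = B.eraseIdx i := erase_ofFn_update S i zhat
    calc |G A z k - G B z k|
        = |(G A z k - G (A.eraseIdx i) z k) + (G (B.eraseIdx i) z k - G B z k)| := by
          rw [he]; ring_nf
      _ ≤ |G A z k - G (A.eraseIdx i) z k| + |G (B.eraseIdx i) z k - G B z k| := abs_add_le _ _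
      _ ≤ Δ + Δ := by
          refine add_le_add h1 ?_
          rw [abs_sub_comm]; exact h2
      _ = 2 * Δ := by ring
  -- per-term bound for j ≠ i
  have term : ∀ (z : Z) (k : Fin n),
      |c (G A z k) (y z k) - c (G B z k) (y z k)| ≤ 2 * τ * Δ := by
    intro z k
    calc |c (G A z k) (y z k) - c (G B z k) (y z k)|
        ≤ τ * |G A z k - G B z k| := hsmooth _ _ _
      _ ≤ τ * (2 * Δ) := by exact mul_le_mul_of_nonneg_left (key z k) hτ
      _ = 2 * τ * Δ := by ring
  have hsplit : ∑ j : Fin m, ∑ k : Fin n, c (G A (S j) k) (y (S j) k)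
      = (∑ j ∈ univ.erase i, ∑ k : Fin n, c (G A (S j) k) (y (S j) k))
        + ∑ k : Fin n, c (G A (S i) k) (y (S i) k) :=
    (Finset.sum_erase_add _ _ (mem_univ i)).symm
  rw [hsplit]
  have habs : |((∑ j ∈ univ.erase i, ∑ k : Fin n, c (G A (S j) k) (y (S j) k))
        + ∑ k : Fin n, c (G A (S i) k) (y (S i) k))
      - ((∑ j ∈ univ.erase i, ∑ k : Fin n, c (G B (S j) k) (y (S j) k))
        + ∑ k : Fin n, c (G B zhat k) (y zhat k))|
      ≤ ((m : ℝ) - 1) * (n * (2 * τ * Δ)) + n * γ := by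
    have e1 : |(∑ j ∈ univ.erase i, ∑ k : Fin n, c (G A (S j) k) (y (S j) k))
        - ∑ j ∈ univ.erase i, ∑ k : Fin n, c (G B (S j) k) (y (S j) k)|
        ≤ ((m : ℝ) - 1) * (n * (2 * τ * Δ)) := by
      rw [← Finset.sum_sub_distrib]
      calc |∑ j ∈ univ.erase i, ((∑ k : Fin n, c (G A (S j) k) (y (S j) k))
              - ∑ k : Fin n, c (G B (S j) k) (y (S j) k))|
          ≤ ∑ j ∈ univ.erase i, |(∑ k : Fin n, c (G A (S j) k) (y (S j) k))
              - ∑ k : Fin n, c (G B (S j) k) (y (S j) k)| := Finset.abs_sum_le_sum_abs _ _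
        _ ≤ ∑ j ∈ univ.erase i, (n * (2 * τ * Δ)) := by
            refine Finset.sum_le_sum fun j _ => ?_
            rw [← Finset.sum_sub_distrib]
            calc |∑ k : Fin n, (c (G A (S j) k) (y (S j) k) - c (G B (S j) k) (y (S j) k))|
                ≤ ∑ k : Fin n, |c (G A (S j) k) (y (S j) k) - c (G B (S j) k) (y (S j) k)| :=
                  Finset.abs_sum_le_sum_abs _ _
              _ ≤ ∑ _k : Fin n, (2 * τ * Δ) := Finset.sum_le_sum fun k _ => term _ k
              _ = n * (2 * τ * Δ) := by simp [mul_comm]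
        _ = ((m : ℝ) - 1) * (n * (2 * τ * Δ)) := by
            rw [Finset.sum_const, nsmul_eq_mul]
            congr 1
            simp [Finset.card_erase_of_mem, hm, Nat.cast_sub hm]
    have e2 : |(∑ k : Fin n, c (G A (S i) k) (y (S i) k))
        - ∑ k : Fin n, c (G B zhat k) (y zhat k)| ≤ n * γ := by
      have hb1 : 0 ≤ ∑ k : Fin n, c (G A (S i) k) (y (S i) k) :=
        Finset.sum_nonneg fun k _ => (hbound A (S i) k).1
      have hb2 : ∑ k : Fin n, c (G A (S i) k) (y (S i) k) ≤ n * γ := by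
        calc ∑ k : Fin n, c (G A (S i) k) (y (S i) k)
            ≤ ∑ _k : Fin n, γ := Finset.sum_le_sum fun k _ => (hbound A (S i) k).2
          _ = n * γ := by simp [mul_comm]
      have hb3 : 0 ≤ ∑ k : Fin n, c (G B zhat k) (y zhat k) :=
        Finset.sum_nonneg fun k _ => (hbound B zhat k).1
      have hb4 : ∑ k : Fin n, c (G B zhat k) (y zhat k) ≤ n * γ := by
        calc ∑ k : Fin n, c (G B zhat k) (y zhat k)
            ≤ ∑ _k : Fin n, γ := Finset.sum_le_sum fun k _ => (hbound B zhat k).2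
          _ = n * γ := by simp [mul_comm]
      rw [abs_sub_le_iff]
      constructor <;> linarith
    calc _ ≤ |(∑ j ∈ univ.erase i, ∑ k : Fin n, c (G A (S j) k) (y (S j) k))
        - ∑ j ∈ univ.erase i, ∑ k : Fin n, c (G B (S j) k) (y (S j) k)|
        + |(∑ k : Fin n, c (G A (S i) k) (y (S i) k))
        - ∑ k : Fin n, c (G B zhat k) (y zhat k)| := by
          rw [add_sub_add_comm]; exact abs_add_le _ _
      _ ≤ _ := add_le_add e1 e2
  rw [← mul_sub, abs_mul]
  have hmn : (0 : ℝ) < (m : ℝ) * n := by positivity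
  have h1n : |1 / ((m : ℝ) * n)| = 1 / ((m : ℝ) * n) := abs_of_pos (by positivity)
  rw [h1n]
  calc 1 / ((m : ℝ) * n) * |_| ≤ 1 / ((m : ℝ) * n) * (((m : ℝ) - 1) * (n * (2 * τ * Δ)) + n * γ) :=
        mul_le_mul_of_nonneg_left habs (by positivity)
    _ = (2 * ((m : ℝ) - 1) * τ * Δ + γ) / m := by
        field_simp
end

section
/- Suppose the point-wise cost c_τ is τ-smooth, the point-wise loss satisfies 0 ≤ ℓ_τ(g, z, k) ≤ γ, and the algorithm has removal-based function stability Δ̄ holding for every training set (including replaced training sets). Let f = G_S and consider replacing the i-th training sample z_i by ẑ_i, yielding f^i = G_{S^i}. Then the function S ↦ R(G_S) − R_e(G_S) has bounded differences: |[R(f) − R_e(f)] − [R(f^i) − R_e(f)^i]| ≤ ((4m − 2)τΔ̄ + γ)/m, where R is the generalization risk, R_e(f) is the empirical risk of f on S, and R_e(f)^i is the empirical risk of f^i on S^i. -/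
open MeasureTheory Finset

/-- **Bounded differences of the generalization gap (McDiarmid condition).**
Under τ-smoothness of the cost, boundedness of the point-wise loss in `[0, γ]`,
and removal-based function stability `Δ̄` (for every training set, including
replaced ones), replacing the `i`-th training sample `S i` by `ẑ` changes
`R(G_S) − R_e(G_S)` by at most `((4m − 2)τΔ̄ + γ)/m`. -/
theorem generalization_gap_bounded_differences
    {Z Ytag : Type*} [MeasurableSpace Z] (D : Measure Z) [IsProbabilityMeasure D]
    (m n : ℕ) (hm : 0 < m) (hn : 0 < n)
    (G : List Z → Z → Fin n → ℝ)   -- learning algorithm on training lists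
    (y : Z → Fin n → Ytag)          -- gold tags of a sample
    (c : ℝ → Ytag → ℝ) (τ γ Δ : ℝ) (hτ : 0 ≤ τ)
    (hsmooth : ∀ (a b : ℝ) (t : Ytag), |c a t - c b t| ≤ τ * |a - b|)
    (hbound : ∀ (S' : List Z) (z : Z) (k : Fin n),
      0 ≤ c (G S' z k) (y z k) ∧ c (G S' z k) (y z k) ≤ γ)
    (hstab : ∀ (S' : List Z) (i : ℕ) (z : Z) (k : Fin n),
      |G S' z k - G (S'.eraseIdx i) z k| ≤ Δ)
    (hint : ∀ S' : List Z,
      Integrable (fun z => ∑ k : Fin n, c (G S' z k) (y z k)) D)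
    (S : Fin m → Z) (i : Fin m) (zhat : Z) :
    |((∫ z, ∑ k : Fin n, c (G (List.ofFn S) z k) (y z k) ∂D) / (n : ℝ)
        - (1 / ((m : ℝ) * n)) *
          ∑ j : Fin m, ∑ k : Fin n, c (G (List.ofFn S) (S j) k) (y (S j) k))
      - ((∫ z, ∑ k : Fin n,
            c (G (List.ofFn (Function.update S i zhat)) z k) (y z k) ∂D) / (n : ℝ)
        - (1 / ((m : ℝ) * n)) *
          ((∑ j ∈ univ.erase i, ∑ k : Fin n,
              c (G (List.ofFn (Function.update S i zhat)) (S j) k) (y (S j) k))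
            + ∑ k : Fin n,
              c (G (List.ofFn (Function.update S i zhat)) zhat k) (y zhat k)))|
      ≤ ((4 * (m : ℝ) - 2) * τ * Δ + γ) / m := by
  classical
  set LS := List.ofFn S with hLS
  set LS' := List.ofFn (Function.update S i zhat) with hLS'
  -- the erased lists coincide
  have herase : LS.eraseIdx (i : ℕ) = LS'.eraseIdx (i : ℕ) := by
    apply List.ext_getElem
    · simp [LS, LS', List.length_eraseIdx]
    · intro j h1 h2
      rw [List.getElem_eraseIdx, List.getElem_eraseIdx]
      by_cases h : j < (i : ℕ)
      · rw [dif_pos h, dif_pos h]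
        simp only [hLS, hLS', List.getElem_ofFn]
        exact (Function.update_of_ne (Fin.ne_of_val_ne (by simp; omega)) _ _).symm
      · rw [dif_neg h, dif_neg h]
        simp only [hLS, hLS', List.getElem_ofFn]
        exact (Function.update_of_ne (Fin.ne_of_val_ne (by simp; omega)) _ _).symm
  have hΔ0 : 0 ≤ Δ := le_trans (abs_nonneg _) (hstab LS 0 zhat ⟨0, hn⟩)
  have hγ0 : 0 ≤ γ := le_trans (hbound LS zhat ⟨0, hn⟩).1 (hbound LS zhat ⟨0, hn⟩).2
  -- pointwise function stability between the two trained models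
  have hG : ∀ (z : Z) (k : Fin n), |G LS z k - G LS' z k| ≤ 2 * Δ := by
    intro z k
    calc |G LS z k - G LS' z k|
        ≤ |G LS z k - G (LS.eraseIdx (i : ℕ)) z k|
          + |G (LS.eraseIdx (i : ℕ)) z k - G LS' z k| := abs_sub_le _ _ _
      _ ≤ Δ + Δ := by
          refine add_le_add (hstab LS i z k) ?_
          rw [herase, abs_sub_comm]
          exact hstab LS' i z k
      _ = 2 * Δ := by ring
  -- loss notation
  set Lf : Z → ℝ := fun z => ∑ k : Fin n, c (G LS z k) (y z k) with hLf
  set Lf' : Z → ℝ := fun z => ∑ k : Fin n, c (G LS' z k) (y z k) with hLf'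
  have hLdiff : ∀ z : Z, |Lf z - Lf' z| ≤ (n : ℝ) * (2 * τ * Δ) := by
    intro z
    rw [hLf, hLf', ← Finset.sum_sub_distrib]
    refine le_trans (Finset.abs_sum_le_sum_abs _ _) ?_
    have : ∀ k ∈ Finset.univ, |c (G LS z k) (y z k) - c (G LS' z k) (y z k)|
        ≤ 2 * τ * Δ := by
      intro k _
      calc |c (G LS z k) (y z k) - c (G LS' z k) (y z k)|
          ≤ τ * |G LS z k - G LS' z k| := hsmooth _ _ _
        _ ≤ τ * (2 * Δ) := mul_le_mul_of_nonneg_left (hG z k) hτ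
        _ = 2 * τ * Δ := by ring
    calc (∑ k : Fin n, |c (G LS z k) (y z k) - c (G LS' z k) (y z k)|)
        ≤ (Finset.univ : Finset (Fin n)).card • (2 * τ * Δ) :=
          Finset.sum_le_card_nsmul _ _ _ this
      _ = (n : ℝ) * (2 * τ * Δ) := by simp [nsmul_eq_mul]
  -- loss bounds
  have hLnn : ∀ (S' : List Z) (z : Z),
      0 ≤ ∑ k : Fin n, c (G S' z k) (y z k) := fun S' z =>
    Finset.sum_nonneg fun k _ => (hbound S' z k).1
  have hLub : ∀ (S' : List Z) (z : Z),
      ∑ k : Fin n, c (G S' z k) (y z k) ≤ (n : ℝ) * γ := by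
    intro S' z
    calc (∑ k : Fin n, c (G S' z k) (y z k))
        ≤ (Finset.univ : Finset (Fin n)).card • γ :=
          Finset.sum_le_card_nsmul _ _ _ fun k _ => (hbound S' z k).2
      _ = (n : ℝ) * γ := by simp [nsmul_eq_mul]
  -- integral difference bound
  have hI : |(∫ z, Lf z ∂D) - ∫ z, Lf' z ∂D| ≤ (n : ℝ) * (2 * τ * Δ) := by
    rw [← integral_sub (hint LS) (hint LS')]
    have := norm_integral_le_of_norm_le_const (μ := D)
      (f := fun z => Lf z - Lf' z) (C := (n : ℝ) * (2 * τ * Δ))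
      (Filter.Eventually.of_forall fun z => by
        simpa [Real.norm_eq_abs] using hLdiff z)
    simpa [Real.norm_eq_abs, measure_univ] using this
  -- empirical sum difference bound
  set T : ℝ := ∑ j : Fin m, Lf (S j) with hT
  set T' : ℝ := (∑ j ∈ univ.erase i, Lf' (S j)) + Lf' zhat with hT'
  have hTT' : |T - T'| ≤ ((m : ℝ) - 1) * ((n : ℝ) * (2 * τ * Δ)) + (n : ℝ) * γ := by
    have hTsplit : T = (∑ j ∈ univ.erase i, Lf (S j)) + Lf (S i) := by
      rw [hT, Finset.sum_erase_add _ _ (Finset.mem_univ i)]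
    have : T - T' = (∑ j ∈ univ.erase i, (Lf (S j) - Lf' (S j)))
        + (Lf (S i) - Lf' zhat) := by
      rw [hTsplit, hT', Finset.sum_sub_distrib]; ring
    rw [this]
    refine le_trans (abs_add_le _ _) (add_le_add ?_ ?_)
    · refine le_trans (Finset.abs_sum_le_sum_abs _ _) ?_
      calc (∑ j ∈ univ.erase i, |Lf (S j) - Lf' (S j)|)
          ≤ (univ.erase i).card • ((n : ℝ) * (2 * τ * Δ)) :=
            Finset.sum_le_card_nsmul _ _ _ fun j _ => hLdiff (S j)
        _ = ((m : ℝ) - 1) * ((n : ℝ) * (2 * τ * Δ)) := by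
            rw [Finset.card_erase_of_mem (Finset.mem_univ i), Finset.card_univ,
              Fintype.card_fin, nsmul_eq_mul, Nat.cast_sub hm]
            norm_num
    · rw [abs_sub_le_iff]
      constructor
      · linarith [hLub LS (S i), hLnn LS' zhat]
      · linarith [hLub LS' zhat, hLnn LS (S i)]
  -- put everything together
  have hmR : (0 : ℝ) < m := by exact_mod_cast hm
  have hnR : (0 : ℝ) < n := by exact_mod_cast hn
  have hexpr :
      ((∫ z, Lf z ∂D) / (n : ℝ) - (1 / ((m : ℝ) * n)) * T)
        - ((∫ z, Lf' z ∂D) / (n : ℝ) - (1 / ((m : ℝ) * n)) * T')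
      = ((∫ z, Lf z ∂D) - ∫ z, Lf' z ∂D) / (n : ℝ)
        - (T - T') / ((m : ℝ) * n) := by
    field_simp
    ring
  calc |((∫ z, Lf z ∂D) / (n : ℝ) - (1 / ((m : ℝ) * n)) * T)
        - ((∫ z, Lf' z ∂D) / (n : ℝ) - (1 / ((m : ℝ) * n)) * T')|
      = |((∫ z, Lf z ∂D) - ∫ z, Lf' z ∂D) / (n : ℝ)
        - (T - T') / ((m : ℝ) * n)| := by rw [hexpr]
    _ ≤ |((∫ z, Lf z ∂D) - ∫ z, Lf' z ∂D)| / (n : ℝ)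
        + |T - T'| / ((m : ℝ) * n) := by
        refine le_trans (abs_sub _ _) ?_
        rw [abs_div, abs_div]
        gcongr <;> simp [abs_of_pos, hmR, hnR, le_of_lt, mul_pos]
    _ ≤ ((n : ℝ) * (2 * τ * Δ)) / (n : ℝ)
        + (((m : ℝ) - 1) * ((n : ℝ) * (2 * τ * Δ)) + (n : ℝ) * γ) / ((m : ℝ) * n) := by
        gcongr
    _ = ((4 * (m : ℝ) - 2) * τ * Δ + γ) / m := by
        field_simp
        ring
end

section
/- Suppose G is a symmetric learning algorithm, the training samples are drawn i.i.d. from D, the point-wise cost c_τ is τ-smooth, and G has removal-based function stability Δ̄ holding for every training set (including replaced training sets). Then the expected generalization gap satisfies E_S[R(G_S) − R_e(G_S)] ≤ 2τΔ̄ (assuming the expectations are finite). -/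
open MeasureTheory Finset

private lemma eraseIdx_ofFn_update {Z : Type*} {m : ℕ} (S : Fin m → Z) (i : Fin m) (z : Z) :
    (List.ofFn S).eraseIdx i.1 = (List.ofFn (Function.update S i z)).eraseIdx i.1 := by
  classical
  apply List.ext_getElem
  · simp [List.length_eraseIdx]
  · intro j h1 h2
    rw [List.getElem_eraseIdx, List.getElem_eraseIdx]
    split
    · rename_i hji
      rw [List.getElem_ofFn, List.getElem_ofFn, Function.update_of_ne]
      exact Fin.ne_of_val_ne (Nat.ne_of_lt hji)
    · rename_i hji
      rw [List.getElem_ofFn, List.getElem_ofFn, Function.update_of_ne]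
      exact Fin.ne_of_val_ne (show j + 1 ≠ (i : ℕ) by omega)

private lemma mp_precomp {Z : Type*} [MeasurableSpace Z] (D : Measure Z) [IsProbabilityMeasure D]
    {M : ℕ} (σ : Equiv.Perm (Fin M)) :
    MeasurePreserving (fun S : Fin M → Z => S ∘ σ)
      (Measure.pi fun _ => D) (Measure.pi fun _ => D) := by
  have hmeas : Measurable (fun S : Fin M → Z => S ∘ σ) :=
    measurable_pi_lambda _ fun i => measurable_pi_apply _
  refine ⟨hmeas, (Measure.pi_eq fun s hs => ?_).symm⟩
  rw [Measure.map_apply hmeas (MeasurableSet.univ_pi hs)]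
  have hpre : (fun S : Fin M → Z => S ∘ σ) ⁻¹' Set.pi Set.univ s
      = Set.pi Set.univ fun j => s (σ.symm j) := by
    ext S
    simp only [Set.mem_preimage, Set.mem_pi, Set.mem_univ, forall_true_left, Function.comp]
    constructor
    · intro h j; simpa using h (σ.symm j)
    · intro h i; simpa using h (σ i)
  rw [hpre, Measure.pi_pi]
  exact Equiv.prod_comp σ.symm fun i => D (s i)

private lemma mp_swapPair {Z : Type*} [MeasurableSpace Z] (D : Measure Z)
    [IsProbabilityMeasure D] {m' : ℕ} (i : Fin (m' + 1)) :
    MeasurePreserving (fun p : (Fin (m' + 1) → Z) × Z => (Function.update p.1 i p.2, p.1 i))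
      ((Measure.pi fun _ => D).prod D) ((Measure.pi fun _ => D).prod D) := by
  classical
  set e := MeasurableEquiv.piFinSuccAbove (fun _ : Fin (m' + 1 + 1) => Z) (Fin.last (m' + 1))
    with he
  set Ψ : (Fin (m' + 1 + 1) → Z) ≃ᵐ (Fin (m' + 1) → Z) × Z :=
    e.trans MeasurableEquiv.prodComm with hΨdef
  have hΨ : MeasurePreserving Ψ (Measure.pi fun _ => D) ((Measure.pi fun _ => D).prod D) := by
    rw [hΨdef, MeasurableEquiv.coe_trans]
    exact Measure.measurePreserving_swap.comp (measurePreserving_piFinSuccAbove (fun _ => D) _)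
  set σ : Equiv.Perm (Fin (m' + 1 + 1)) :=
    Equiv.swap (Fin.castSucc i) (Fin.last (m' + 1)) with hσ
  have hcomp : MeasurePreserving (⇑Ψ ∘ (fun w : Fin (m' + 1 + 1) → Z => w ∘ σ) ∘ ⇑Ψ.symm)
      ((Measure.pi fun _ => D).prod D) ((Measure.pi fun _ => D).prod D) :=
    hΨ.comp ((mp_precomp D σ).comp (MeasurePreserving.symm Ψ hΨ))
  have hfun : (⇑Ψ ∘ (fun w : Fin (m' + 1 + 1) → Z => w ∘ σ) ∘ ⇑Ψ.symm)
      = fun p : (Fin (m' + 1) → Z) × Z => (Function.update p.1 i p.2, p.1 i) := by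
    funext p
    obtain ⟨S, z⟩ := p
    have hsymm : Ψ.symm (S, z) = Fin.snoc S z := by
      show e.symm (MeasurableEquiv.prodComm.symm (S, z)) = Fin.snoc S z
      have : (MeasurableEquiv.prodComm.symm (S, z) : Z × (Fin (m' + 1) → Z)) = (z, S) := rfl
      rw [this, he, MeasurableEquiv.piFinSuccAbove_symm_apply]
      exact Fin.insertNth_last' z S
    show Ψ ((Ψ.symm (S, z)) ∘ σ) = _
    rw [hsymm]
    have happ : ∀ w : Fin (m' + 1 + 1) → Z,
        Ψ w = (fun j : Fin (m' + 1) => w (Fin.castSucc j), w (Fin.last (m' + 1))) := by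
      intro w
      show MeasurableEquiv.prodComm (e w) = _
      rw [he, MeasurableEquiv.piFinSuccAbove_apply]
      have : (Fin.insertNthEquiv (fun _ : Fin (m' + 1 + 1) => Z) (Fin.last (m' + 1))).symm w
          = (w (Fin.last (m' + 1)), fun j => w ((Fin.last (m' + 1)).succAbove j)) := rfl
      rw [this]
      simp [Fin.succAbove_last]
      rfl
    rw [happ]
    refine Prod.ext ?_ ?_
    · funext j
      by_cases hji : j = i
      · subst hji
        simp [σ, Equiv.swap_apply_left]
      · have h1 : Fin.castSucc j ≠ Fin.castSucc i := fun h => hji (Fin.castSucc_injective _ h)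
        have h2 : Fin.castSucc j ≠ Fin.last (m' + 1) := (Fin.castSucc_lt_last j).ne
        simp [σ, Equiv.swap_apply_of_ne_of_ne h1 h2, Function.update_of_ne hji]
    · simp [σ, Equiv.swap_apply_right]
  rw [hfun] at hcomp
  exact hcomp

/-- **Expected generalization gap bound from stability.**
For a symmetric learning algorithm `G` trained on `m` i.i.d. samples from `D`,
with τ-smooth point-wise cost and removal-based function stability `Δ̄` holding
for every training set (including replaced ones), the expected generalization
gap satisfies `E_S[R(G_S) − R_e(G_S)] ≤ 2τΔ̄` (assuming the expectations are
finite). -/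
theorem expected_generalization_gap_le
    {Z Ytag : Type*} [MeasurableSpace Z] (D : Measure Z) [IsProbabilityMeasure D]
    (m n : ℕ) (hm : 0 < m) (hn : 0 < n)
    (G : List Z → Z → Fin n → ℝ)   -- learning algorithm on training lists
    (y : Z → Fin n → Ytag)          -- gold tags of a sample
    (c : ℝ → Ytag → ℝ) (τ Δ : ℝ) (hτ : 0 ≤ τ) (hΔ : 0 ≤ Δ)
    (hsym : ∀ S S' : List Z, S.Perm S' → G S = G S')
    (hsmooth : ∀ (a b : ℝ) (t : Ytag), |c a t - c b t| ≤ τ * |a - b|)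
    (hstab : ∀ (S' : List Z) (i : ℕ) (z : Z) (k : Fin n),
      |G S' z k - G (S'.eraseIdx i) z k| ≤ Δ)
    -- finiteness of the expectations involved
    (hint_inner : ∀ S' : List Z,
      Integrable (fun z => ∑ k : Fin n, c (G S' z k) (y z k)) D)
    (hint_risk : Integrable
      (fun S : Fin m → Z => ∫ z, ∑ k : Fin n, c (G (List.ofFn S) z k) (y z k) ∂D)
      (Measure.pi fun _ : Fin m => D))
    (hint_emp : Integrable
      (fun S : Fin m → Z =>
        ∑ j : Fin m, ∑ k : Fin n, c (G (List.ofFn S) (S j) k) (y (S j) k))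
      (Measure.pi fun _ : Fin m => D))
    (hint_new : Integrable
      (fun p : (Fin m → Z) × Z =>
        ∑ k : Fin n, c (G (List.ofFn p.1) p.2 k) (y p.2 k))
      ((Measure.pi fun _ : Fin m => D).prod D))
    (hint_repl : ∀ i : Fin m, Integrable
      (fun p : (Fin m → Z) × Z =>
        ∑ k : Fin n, c (G (List.ofFn (Function.update p.1 i p.2)) p.2 k) (y p.2 k))
      ((Measure.pi fun _ : Fin m => D).prod D)) :
    (∫ S, ((∫ z, ∑ k : Fin n, c (G (List.ofFn S) z k) (y z k) ∂D) / (n : ℝ)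
          - (1 / ((m : ℝ) * n)) *
            ∑ j : Fin m, ∑ k : Fin n, c (G (List.ofFn S) (S j) k) (y (S j) k))
        ∂(Measure.pi fun _ : Fin m => D))
      ≤ 2 * τ * Δ := by
  classical
  obtain ⟨m', rfl⟩ : ∃ m'', m = m'' + 1 := ⟨m - 1, (Nat.succ_pred_eq_of_pos hm).symm⟩
  set μ := (Measure.pi fun _ : Fin (m' + 1) => D) with hμ
  set ν := μ.prod D with hν
  set N : (Fin (m' + 1) → Z) × Z → ℝ :=
    fun p => ∑ k : Fin n, c (G (List.ofFn p.1) p.2 k) (y p.2 k) with hNdef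
  set M : Fin (m' + 1) → (Fin (m' + 1) → Z) × Z → ℝ :=
    fun i p => ∑ k : Fin n, c (G (List.ofFn (Function.update p.1 i p.2)) p.2 k) (y p.2 k)
    with hMdef
  set f : Fin (m' + 1) → (Fin (m' + 1) → Z) → ℝ :=
    fun j S => ∑ k : Fin n, c (G (List.ofFn S) (S j) k) (y (S j) k) with hfdef
  -- Step B: exchange identity per index
  have key : ∀ i : Fin (m' + 1),
      (∫ p, M i p ∂ν) = (∫ p, f i p.1 ∂ν) ∧ Integrable (fun p => f i p.1) ν := by
    intro i
    have hR := mp_swapPair D i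
    rw [← hμ, ← hν] at hR
    have hmeas : AEStronglyMeasurable (M i)
        (Measure.map (fun p : (Fin (m' + 1) → Z) × Z =>
          (Function.update p.1 i p.2, p.1 i)) ν) := by
      rw [hR.map_eq]; exact (hint_repl i).1
    have h2 : (M i) ∘ (fun p : (Fin (m' + 1) → Z) × Z =>
        (Function.update p.1 i p.2, p.1 i)) = fun p => f i p.1 := by
      funext p
      simp only [Function.comp, hMdef, hfdef, Function.update_idem, Function.update_eq_self]
    have h1 : ∫ p, M i p ∂ν = ∫ p, f i p.1 ∂ν := by
      conv_lhs => rw [← hR.map_eq]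
      rw [integral_map hR.measurable.aemeasurable hmeas]
      exact congrArg (fun g => ∫ p, g p ∂ν) h2
    have h3 : Integrable (fun p => f i p.1) ν := by
      rw [← h2]
      exact (integrable_map_measure hmeas hR.measurable.aemeasurable).mp
        (by rw [hR.map_eq]; exact hint_repl i)
    exact ⟨h1, h3⟩
  -- Step C: empirical risk as sum of replaced integrals
  have hfst : Measure.map Prod.fst ν = μ := by
    rw [hν, Measure.map_fst_prod]; simp
  have hemp : (∫ S, (∑ j, f j S) ∂μ) = ∑ j, ∫ p, M j p ∂ν := by
    have h3 : (∫ S, (∑ j, f j S) ∂μ) = ∫ p, (∑ j, f j p.1) ∂ν := by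
      rw [← hfst]
      exact integral_map measurable_fst.aemeasurable (by rw [hfst]; exact hint_emp.1)
    rw [h3, integral_finset_sum _ (fun j _ => (key j).2)]
    exact Finset.sum_congr rfl fun j _ => ((key j).1).symm
  -- Step D: true risk via Fubini
  have hrisk : (∫ S, (∫ z, ∑ k : Fin n, c (G (List.ofFn S) z k) (y z k) ∂D) ∂μ)
      = ∫ p, N p ∂ν := (integral_prod _ hint_new).symm
  -- Step E: pointwise stability bound
  have hb : ∀ i : Fin (m' + 1), (∫ p, N p ∂ν) - (∫ p, M i p ∂ν) ≤ 2 * τ * Δ * n := by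
    intro i
    rw [← integral_sub hint_new (hint_repl i)]
    have hpt : ∀ p : (Fin (m' + 1) → Z) × Z, N p - M i p ≤ 2 * τ * Δ * n := by
      rintro ⟨S, z⟩
      refine le_trans (le_abs_self _) ?_
      have h1 : N (S, z) - M i (S, z)
          = ∑ k : Fin n, (c (G (List.ofFn S) z k) (y z k)
            - c (G (List.ofFn (Function.update S i z)) z k) (y z k)) := by
        simp [hNdef, hMdef, Finset.sum_sub_distrib]
      rw [h1]
      refine le_trans (Finset.abs_sum_le_sum_abs _ _) ?_
      have hk : ∀ k : Fin n, |c (G (List.ofFn S) z k) (y z k)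
          - c (G (List.ofFn (Function.update S i z)) z k) (y z k)| ≤ τ * (2 * Δ) := by
        intro k
        refine le_trans (hsmooth _ _ _) ?_
        refine mul_le_mul_of_nonneg_left ?_ hτ
        have hA := hstab (List.ofFn S) i.1 z k
        have hB := hstab (List.ofFn (Function.update S i z)) i.1 z k
        rw [← eraseIdx_ofFn_update S i z] at hB
        calc |G (List.ofFn S) z k - G (List.ofFn (Function.update S i z)) z k|
            ≤ |G (List.ofFn S) z k - G ((List.ofFn S).eraseIdx i.1) z k|
              + |G ((List.ofFn S).eraseIdx i.1) z k
                - G (List.ofFn (Function.update S i z)) z k| := abs_sub_le _ _ _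
          _ ≤ Δ + Δ := by
              refine add_le_add hA ?_
              rw [abs_sub_comm]; exact hB
          _ = 2 * Δ := by ring
      refine le_trans (Finset.sum_le_sum fun k _ => hk k) ?_
      rw [Finset.sum_const, Finset.card_univ, Fintype.card_fin, nsmul_eq_mul]
      ring_nf
      exact le_refl _
    calc (∫ p, (N p - M i p) ∂ν) ≤ ∫ _, (2 * τ * Δ * n : ℝ) ∂ν :=
          integral_mono (hint_new.sub (hint_repl i)) (integrable_const _) hpt
      _ = 2 * τ * Δ * n := by
          have : IsProbabilityMeasure ν := by rw [hν]; infer_instance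
          simp
  -- Final assembly
  rw [integral_sub (hint_risk.div_const _) (hint_emp.const_mul _), integral_div,
    integral_const_mul, hemp, hrisk]
  set IN := ∫ p, N p ∂ν with hIN
  set I : Fin (m' + 1) → ℝ := fun j => ∫ p, M j p ∂ν with hI
  have hmr : (0 : ℝ) < ((m' + 1 : ℕ) : ℝ) := by positivity
  have hnr : (0 : ℝ) < (n : ℝ) := by exact_mod_cast hn
  have hsum : ((m' + 1 : ℕ) : ℝ) * IN - ∑ j, I j ≤ ((m' + 1 : ℕ) : ℝ) * (2 * τ * Δ * n) := by
    have h := Finset.sum_le_sum (fun j (_ : j ∈ Finset.univ) => hb j)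
    have h2 : (∑ _j : Fin (m' + 1), (2 * τ * Δ * (n : ℝ)))
        = ((m' + 1 : ℕ) : ℝ) * (2 * τ * Δ * n) := by
      rw [Finset.sum_const, Finset.card_univ, Fintype.card_fin, nsmul_eq_mul]
    have h3 : (∑ j : Fin (m' + 1), (IN - I j))
        = ((m' + 1 : ℕ) : ℝ) * IN - ∑ j, I j := by
      rw [Finset.sum_sub_distrib, Finset.sum_const, Finset.card_univ, Fintype.card_fin,
        nsmul_eq_mul]
    rw [h3, h2] at h
    exact h
  have heq : IN / (n : ℝ) - 1 / (((m' + 1 : ℕ) : ℝ) * n) * ∑ j, I j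
      = 1 / (((m' + 1 : ℕ) : ℝ) * n) * (((m' + 1 : ℕ) : ℝ) * IN - ∑ j, I j) := by
    field_simp
  rw [heq]
  calc 1 / (((m' + 1 : ℕ) : ℝ) * n) * (((m' + 1 : ℕ) : ℝ) * IN - ∑ j, I j)
      ≤ 1 / (((m' + 1 : ℕ) : ℝ) * n) * (((m' + 1 : ℕ) : ℝ) * (2 * τ * Δ * n)) := by
        refine mul_le_mul_of_nonneg_left hsum ?_
        positivity
    _ = 2 * τ * Δ := by field_simp
end

section
/- Let G be a symmetric real-valued structured prediction algorithm trained on m samples drawn i.i.d. from D, whose point-wise cost c_τ is τ-smooth and whose point-wise loss satisfies 0 ≤ ℓ_τ(G_S, z, k) ≤ γ for all S, z, k. Suppose G has removal-based function stability Δ̄ holding for every training set (including replaced training sets), and write f = G_S. Then for any δ ∈ (0, 1), with probability at least 1 − δ over the random draw of the training set S, the generalization risk is bounded by R(f) ≤ R_e(f) + 2τΔ̄ + ((4m − 2)τΔ̄ + γ)·√(ln(1/δ)/(2m)). -/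
/-!
Removal stability `Δ̄` gives replace-one stability `2Δ̄` of the predictions, hence `2nτΔ̄` for
the sample-wise loss. Swapping a training point with a fresh sample (exchangeability
of the i.i.d. draw) then bounds the expected generalization gap by that stability constant, while
replacing one training point moves the gap by at most `(nγ + (2m - 1)·2nτΔ̄) / m`. McDiarmid's
inequality, proved by conditioning on one coordinate at a time and applying Hoeffding's lemma to
each, turns these bounded differences into the `√(log(1/δ) / (2m))` deviation term.
-/

open MeasureTheory Finset
open Real ProbabilityTheory
open scoped NNReal

lemma abs_integral_le_of_forall_abs_le {α : Type*} [MeasurableSpace α] {μ : Measure α}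
    [IsProbabilityMeasure μ] {f : α → ℝ} {B : ℝ} (h : ∀ x, |f x| ≤ B) : |∫ x, f x ∂μ| ≤ B := by
  simpa using norm_integral_le_of_norm_le_const (μ := μ) (f := f) (ae_of_all _ h)

lemma integral_mem_Icc_of_forall_mem_Icc {α : Type*} [MeasurableSpace α] {μ : Measure α}
    [IsProbabilityMeasure μ] {f : α → ℝ} {B : ℝ} (h : ∀ x, f x ∈ Set.Icc 0 B) :
    ∫ x, f x ∂μ ∈ Set.Icc 0 B :=
  ⟨integral_nonneg fun x => (h x).1, le_of_abs_le <| abs_integral_le_of_forall_abs_le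
    fun x => (abs_of_nonneg (h x).1).trans_le (h x).2⟩

lemma exists_forall_mem_Icc_of_abs_sub_le {α : Type*} [Nonempty α] {h : α → ℝ} {c : ℝ}
    (hh : ∀ x y, |h x - h y| ≤ c) : ∃ a, ∀ x, h x ∈ Set.Icc a (a + c) := by
  obtain ⟨x₀⟩ := ‹Nonempty α›
  have hbdd : BddBelow (Set.range h) :=
    ⟨h x₀ - c, by rintro _ ⟨x, rfl⟩; linarith [(abs_le.1 (hh x x₀)).1]⟩
  refine ⟨⨅ x, h x, fun x => ⟨ciInf_le hbdd x, ?_⟩⟩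
  have : h x - c ≤ ⨅ y, h y := le_ciInf fun y => by linarith [(abs_le.1 (hh x y)).2]
  linarith

section ProductMeasure

variable {Z : Type*} [MeasurableSpace Z] {D : Measure Z}

@[fun_prop]
lemma Measurable.fin_insertNth {α : Type*} [MeasurableSpace α] {k : ℕ} (i : Fin (k + 1))
    {g : α → Z} {h : α → Fin k → Z} (hg : Measurable g) (hh : Measurable h) :
    Measurable fun a => (i.insertNth (g a) (h a) : Fin (k + 1) → Z) :=
  (MeasurableEquiv.piFinSuccAbove (fun _ => Z) i).symm.measurable.comp (hg.prodMk hh)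

lemma integral_pi_insertNth [SigmaFinite D] {k : ℕ} (i : Fin (k + 1))
    {φ : (Fin (k + 1) → Z) → ℝ} (hφ : Integrable φ (Measure.pi fun _ => D)) :
    ∫ S, φ S ∂(Measure.pi fun _ => D) =
      ∫ r, ∫ x, φ (i.insertNth x r) ∂D ∂(Measure.pi fun _ : Fin k => D) := by
  have hmp := (measurePreserving_piFinSuccAbove (fun _ => D) i).symm
  rw [← hmp.integral_comp']
  exact integral_prod_symm _
    ((hmp.integrable_comp_emb (MeasurableEquiv.measurableEmbedding _)).2 hφ)

lemma integral_integral_update_pi [IsProbabilityMeasure D] {m : ℕ} (j : Fin m)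
    {φ : (Fin m → Z) → ℝ} (hφ : Integrable φ (Measure.pi fun _ => D)) :
    ∫ S, ∫ z, φ (Function.update S j z) ∂D ∂(Measure.pi fun _ => D) =
      ∫ S, φ S ∂(Measure.pi fun _ => D) := by
  obtain ⟨k, rfl⟩ : ∃ k, m = k + 1 := Nat.exists_eq_add_one_of_ne_zero j.pos.ne'
  have hmp := (measurePreserving_piFinSuccAbove (fun _ => D) j).symm
  have hupdate (p : Z × (Fin k → Z)) (z : Z) :
      Function.update ((MeasurableEquiv.piFinSuccAbove (fun _ => Z) j).symm p) j z =
        j.insertNth z p.2 := Fin.update_insertNth _ _ _ _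
  rw [← hmp.integral_comp', integral_pi_insertNth j hφ]
  simp only [hupdate]
  rw [integral_fun_snd (fun r => ∫ z, φ (j.insertNth z r) ∂D), probReal_univ, one_smul]

end ProductMeasure

section McDiarmid

variable {Z : Type*}

def HasBoundedDifferences {k : ℕ} (f : (Fin k → Z) → ℝ) (c : ℝ) : Prop :=
  ∀ S i z, |f (Function.update S i z) - f S| ≤ c

namespace HasBoundedDifferences

variable [MeasurableSpace Z] {D : Measure Z} [IsProbabilityMeasure D] {k : ℕ}
  {f : (Fin (k + 1) → Z) → ℝ}

lemma integral_exp_insertNth_le {c : ℝ≥0} (hfc : HasBoundedDifferences f c) (hf : Measurable f)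
    (i : Fin (k + 1)) (r : Fin k → Z) (M t : ℝ) :
    ∫ x, exp (t * (f (i.insertNth x r) - M)) ∂D ≤
      exp (((c / 2) ^ 2 : ℝ≥0) * t ^ 2 / 2) *
        exp (t * (∫ x, f (i.insertNth x r) ∂D - M)) := by
  have := nonempty_of_isProbabilityMeasure D
  obtain ⟨a, ha⟩ := exists_forall_mem_Icc_of_abs_sub_le (h := fun x => f (i.insertNth x r))
    fun x y => by simpa [Fin.update_insertNth] using hfc (i.insertNth y r) i x
  have hoeffding := hasSubgaussianMGF_of_mem_Icc (μ := D) (by fun_prop) (ae_of_all _ ha)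
  simp only [add_sub_cancel_left, NNReal.nnnorm_eq] at hoeffding
  calc ∫ x, exp (t * (f (i.insertNth x r) - M)) ∂D
      = mgf (fun x => f (i.insertNth x r) - ∫ x, f (i.insertNth x r) ∂D) D t *
          exp (t * (∫ x, f (i.insertNth x r) ∂D - M)) := by
        rw [mgf, ← integral_mul_const]
        congr 1 with x
        rw [← exp_add]
        ring_nf
    _ ≤ _ := by
        gcongr
        exact hoeffding.mgf_le t

lemma integral_insertNth {c : ℝ} (hfc : HasBoundedDifferences f c) (hf : Measurable f) {B : ℝ}
    (hB : ∀ S, |f S| ≤ B) (i : Fin (k + 1)) :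
    HasBoundedDifferences (fun r => ∫ x, f (i.insertNth x r) ∂D) c := by
  intro r j z
  have hint (r : Fin k → Z) : Integrable (fun x => f (i.insertNth x r)) D :=
    .of_bound (by fun_prop : Measurable _).aestronglyMeasurable B (ae_of_all _ fun x => hB _)
  rw [← integral_sub (hint _) (hint _)]
  exact abs_integral_le_of_forall_abs_le fun x => by
    simpa [Fin.insertNth_update] using hfc (i.insertNth x r) (i.succAbove j) z

/-- McDiarmid's inequality, in its sub-Gaussian form. -/
theorem hasSubgaussianMGF :
    ∀ {k : ℕ} {f : (Fin k → Z) → ℝ} {c : ℝ≥0}, HasBoundedDifferences f c → Measurable f →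
      ∀ {B : ℝ}, (∀ S, |f S| ≤ B) →
        HasSubgaussianMGF (fun S => f S - ∫ S', f S' ∂(Measure.pi fun _ => D)) (k * (c / 2) ^ 2)
          (Measure.pi fun _ => D)
  | 0, f, c, _, _, _, _ => by
    have (S : Fin 0 → Z) : f S - ∫ S', f S' ∂(Measure.pi fun _ => D) = 0 := by
      simp [Subsingleton.elim _ S]
    simp [this]
  | k + 1, f, c, hfc, hf, B, hB => by
    set μ := Measure.pi fun _ : Fin (k + 1) => D
    set ν := Measure.pi fun _ : Fin k => D
    set M := ∫ S, f S ∂μ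
    set g : (Fin k → Z) → ℝ := fun r => ∫ x, f (Fin.insertNth 0 x r) ∂D
    have hg_meas : Measurable g := by
      have : Measurable fun p : Z × (Fin k → Z) => f (Fin.insertNth 0 p.1 p.2) := by fun_prop
      exact this.stronglyMeasurable.integral_prod_left'.measurable
    have hgM : ∫ r, g r ∂ν = M :=
      (integral_pi_insertNth 0 (.of_bound hf.aestronglyMeasurable B (ae_of_all _ hB))).symm
    have hg : HasSubgaussianMGF (fun r => g r - M) (k * (c / 2) ^ 2) ν := by
      rw [← hgM]
      exact (hfc.integral_insertNth hf hB 0).hasSubgaussianMGF hg_meas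
        fun r => abs_integral_le_of_forall_abs_le fun x => hB _
    have hexp_int (t : ℝ) : Integrable (fun S => exp (t * (f S - M))) μ := by
      refine integrable_exp_mul_of_mem_Icc (a := -B - M) (b := B - M)
        (hf.sub_const M).aemeasurable (ae_of_all _ fun S => ?_)
      have := abs_le.1 (hB S)
      constructor <;> linarith
    refine ⟨hexp_int, fun t => ?_⟩
    calc mgf (fun S => f S - M) μ t
        = ∫ r, ∫ x, exp (t * (f (Fin.insertNth 0 x r) - M)) ∂D ∂ν :=
          integral_pi_insertNth 0 (hexp_int t)
      _ ≤ ∫ r, exp (((c / 2) ^ 2 : ℝ≥0) * t ^ 2 / 2) * exp (t * (g r - M)) ∂ν :=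
          integral_mono_of_nonneg
            (ae_of_all _ fun r => integral_nonneg fun x => (exp_pos _).le)
            ((hg.integrable_exp_mul t).const_mul _)
            (ae_of_all _ fun r => hfc.integral_exp_insertNth_le hf 0 r M t)
      _ = exp (((c / 2) ^ 2 : ℝ≥0) * t ^ 2 / 2) * mgf (fun r => g r - M) ν t := by
          rw [integral_const_mul, mgf]
      _ ≤ exp (((c / 2) ^ 2 : ℝ≥0) * t ^ 2 / 2) * exp ((k * (c / 2) ^ 2 : ℝ≥0) * t ^ 2 / 2) := by
          gcongr
          exact hg.mgf_le t
      _ = exp (((k + 1 : ℕ) * (c / 2) ^ 2 : ℝ≥0) * t ^ 2 / 2) := by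
          rw [← exp_add]
          push_cast
          ring_nf

end HasBoundedDifferences

end McDiarmid

namespace ProbabilityTheory.HasSubgaussianMGF

variable {Ω : Type*} [MeasurableSpace Ω] {μ : Measure Ω} [IsProbabilityMeasure μ] {X : Ω → ℝ}
  {c : ℝ≥0}

lemma measureReal_sqrt_log_lt_le (h : HasSubgaussianMGF X c μ) {δ : ℝ} (hδ0 : 0 < δ)
    (hδ1 : δ ≤ 1) : μ.real {ω | √(2 * c * log (1 / δ)) < X ω} ≤ δ := by
  have hlog : 0 ≤ log (1 / δ) := log_nonneg (one_le_one_div hδ0 hδ1)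
  rcases eq_or_ne c 0 with rfl | hc
  · have hnull : μ {ω | √(2 * (0 : ℝ≥0) * log (1 / δ)) < X ω} = 0 := by
      rw [measure_eq_zero_iff_ae_notMem]
      filter_upwards [h.ae_eq_zero_of_hasSubgaussianMGF_zero] with ω hω
      simp [hω]
    rw [Measure.real, hnull, ENNReal.toReal_zero]
    exact hδ0.le
  calc μ.real {ω | √(2 * c * log (1 / δ)) < X ω}
      ≤ μ.real {ω | √(2 * c * log (1 / δ)) ≤ X ω} :=
        measureReal_mono fun _ hω => Set.mem_ofPred.2 (le_of_lt hω)
    _ ≤ exp (-√(2 * c * log (1 / δ)) ^ 2 / (2 * c)) := h.measure_ge_le (sqrt_nonneg _)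
    _ = δ := by
        rw [sq_sqrt (by positivity), one_div, log_inv]
        field_simp
        rw [exp_log hδ0]

lemma ofReal_one_sub_le_measure_le_sqrt_log (h : HasSubgaussianMGF X c μ) {δ : ℝ}
    (hδ0 : 0 < δ) (hδ1 : δ ≤ 1) :
    ENNReal.ofReal (1 - δ) ≤ μ {ω | X ω ≤ √(2 * c * log (1 / δ))} := by
  have hcompl : {ω | X ω ≤ √(2 * c * log (1 / δ))} = {ω | √(2 * c * log (1 / δ)) < X ω}ᶜ := by
    ext; simp
  rw [← ofReal_measureReal, hcompl,
    probReal_compl_eq_one_sub₀ (nullMeasurableSet_lt aemeasurable_const h.aemeasurable)]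
  gcongr
  exact h.measureReal_sqrt_log_lt_le hδ0 hδ1

end ProbabilityTheory.HasSubgaussianMGF

noncomputable section Stability

variable {Z : Type*} {m : ℕ} {ℓ : (Fin m → Z) → Z → ℝ} {B ε : ℝ}

def empiricalRisk (ℓ : (Fin m → Z) → Z → ℝ) (S : Fin m → Z) : ℝ := (∑ j, ℓ S (S j)) / m

lemma empiricalRisk_mem_Icc (hm : 0 < m) (hℓB : ∀ S z, ℓ S z ∈ Set.Icc 0 B)
    (S : Fin m → Z) : empiricalRisk ℓ S ∈ Set.Icc 0 B := by
  have hm' : (0 : ℝ) < m := Nat.cast_pos.2 hm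
  refine ⟨div_nonneg (sum_nonneg fun j _ => (hℓB S (S j)).1) hm'.le, (div_le_iff₀ hm').2 ?_⟩
  simpa [mul_comm] using sum_le_sum fun j (_ : j ∈ univ) => (hℓB S (S j)).2

variable [MeasurableSpace Z] (D : Measure Z)

def risk (ℓ : (Fin m → Z) → Z → ℝ) (S : Fin m → Z) : ℝ := ∫ z, ℓ S z ∂D

def generalizationGap (ℓ : (Fin m → Z) → Z → ℝ) (S : Fin m → Z) : ℝ :=
  risk D ℓ S - empiricalRisk ℓ S

variable {D} [IsProbabilityMeasure D]

lemma risk_mem_Icc (hℓB : ∀ S z, ℓ S z ∈ Set.Icc 0 B) (S : Fin m → Z) :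
    risk D ℓ S ∈ Set.Icc 0 B :=
  integral_mem_Icc_of_forall_mem_Icc (hℓB S)

lemma integral_risk_le (hℓ : Measurable (Function.uncurry ℓ))
    (hℓB : ∀ S z, ℓ S z ∈ Set.Icc 0 B) (hε : ∀ z, HasBoundedDifferences (ℓ · z) ε) (j : Fin m) :
    ∫ S, risk D ℓ S ∂(Measure.pi fun _ => D) ≤ ∫ S, ℓ S (S j) ∂(Measure.pi fun _ => D) + ε := by
  have hresample : Measurable fun p : (Fin m → Z) × Z => ℓ (Function.update p.1 j p.2) p.2 := by
    fun_prop
  have hint (S : Fin m → Z) : Integrable (ℓ S) D :=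
    .of_mem_Icc 0 B (by fun_prop) (ae_of_all _ (hℓB S))
  have hint' (S : Fin m → Z) : Integrable (fun z => ℓ (Function.update S j z) z) D :=
    .of_mem_Icc 0 B (by fun_prop) (ae_of_all _ fun z => hℓB _ z)
  have hswap (S : Fin m → Z) : risk D ℓ S ≤ ∫ z, ℓ (Function.update S j z) z ∂D + ε := by
    rw [← sub_le_iff_le_add', risk, ← integral_sub (hint S) (hint' S)]
    exact le_of_abs_le <| abs_integral_le_of_forall_abs_le fun z => by
      simpa [abs_sub_comm] using hε z S j z
  have hφ : Integrable (fun S => ℓ S (S j)) (Measure.pi fun _ => D) :=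
    .of_mem_Icc 0 B (by fun_prop) (ae_of_all _ fun S => hℓB _ _)
  have hresample_int : Integrable (fun S => ∫ z, ℓ (Function.update S j z) z ∂D)
      (Measure.pi fun _ => D) :=
    .of_mem_Icc 0 B hresample.stronglyMeasurable.integral_prod_right'.measurable.aemeasurable
      (ae_of_all _ fun S => integral_mem_Icc_of_forall_mem_Icc fun z => hℓB _ z)
  have hresample_eq := integral_integral_update_pi j hφ
  simp only [Function.update_self] at hresample_eq
  calc ∫ S, risk D ℓ S ∂(Measure.pi fun _ => D)
      ≤ ∫ S, (∫ z, ℓ (Function.update S j z) z ∂D + ε) ∂(Measure.pi fun _ => D) :=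
        integral_mono_of_nonneg (ae_of_all _ fun S => (risk_mem_Icc hℓB S).1)
          (hresample_int.add (integrable_const ε)) (ae_of_all _ hswap)
    _ = ∫ S, ℓ S (S j) ∂(Measure.pi fun _ => D) + ε := by
        rw [integral_add hresample_int (integrable_const ε), hresample_eq, integral_const,
          probReal_univ, one_smul]

lemma measurable_generalizationGap (hℓ : Measurable (Function.uncurry ℓ)) :
    Measurable (generalizationGap D ℓ) := by
  have hrisk : Measurable (risk D ℓ) := hℓ.stronglyMeasurable.integral_prod_right'.measurable
  unfold generalizationGap empiricalRisk
  fun_prop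

lemma integral_generalizationGap_le (hm : 0 < m) (hℓ : Measurable (Function.uncurry ℓ))
    (hℓB : ∀ S z, ℓ S z ∈ Set.Icc 0 B) (hε : ∀ z, HasBoundedDifferences (ℓ · z) ε) :
    ∫ S, generalizationGap D ℓ S ∂(Measure.pi fun _ => D) ≤ ε := by
  have hm' : (0 : ℝ) < m := Nat.cast_pos.2 hm
  have hrisk : Integrable (risk D ℓ) (Measure.pi fun _ => D) :=
    .of_mem_Icc 0 B hℓ.stronglyMeasurable.integral_prod_right'.measurable.aemeasurable
      (ae_of_all _ (risk_mem_Icc hℓB))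
  have hloss (j : Fin m) : Integrable (fun S => ℓ S (S j)) (Measure.pi fun _ => D) :=
    .of_mem_Icc 0 B (by fun_prop) (ae_of_all _ fun S => hℓB _ _)
  have hsum : m * ∫ S, risk D ℓ S ∂(Measure.pi fun _ => D) ≤
      ∑ j, ∫ S, ℓ S (S j) ∂(Measure.pi fun _ => D) + m * ε := by
    simpa using sum_le_sum fun j (_ : j ∈ univ) =>
      sub_le_iff_le_add.2 (integral_risk_le (D := D) hℓ hℓB hε j)
  simp only [generalizationGap, empiricalRisk]
  rw [integral_sub hrisk ((integrable_finsetSum _ fun j _ => hloss j).div_const _),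
    integral_div, integral_finsetSum _ fun j _ => hloss j, sub_le_comm, le_div_iff₀ hm']
  linarith

lemma hasBoundedDifferences_generalizationGap (hm : 0 < m) (hℓ : Measurable (Function.uncurry ℓ))
    (hℓB : ∀ S z, ℓ S z ∈ Set.Icc 0 B) (hε : ∀ z, HasBoundedDifferences (ℓ · z) ε) :
    HasBoundedDifferences (generalizationGap D ℓ) ((B + (2 * m - 1) * ε) / m) := by
  intro S i z
  set u := Function.update S i z
  have hm' : (0 : ℝ) < m := Nat.cast_pos.2 hm
  have hint (T : Fin m → Z) : Integrable (ℓ T) D :=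
    .of_mem_Icc 0 B (by fun_prop) (ae_of_all _ (hℓB T))
  have hrisk : |risk D ℓ u - risk D ℓ S| ≤ ε := by
    rw [risk, risk, ← integral_sub (hint u) (hint S)]
    exact abs_integral_le_of_forall_abs_le fun x => hε x S i z
  have hemp : |∑ j, ℓ u (u j) - ∑ j, ℓ S (S j)| ≤ B + (m - 1) * ε := by
    rw [← sum_sub_distrib, ← add_sum_erase _ _ (mem_univ i)]
    refine (abs_add_le _ _).trans (add_le_add ?_ ?_)
    · exact abs_sub_le_of_nonneg_of_le (hℓB _ _).1 (hℓB _ _).2 (hℓB _ _).1 (hℓB _ _).2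
    · calc |∑ j ∈ univ.erase i, (ℓ u (u j) - ℓ S (S j))|
          ≤ ∑ j ∈ univ.erase i, ε := by
            refine (abs_sum_le_sum_abs _ _).trans (sum_le_sum fun j hj => ?_)
            rw [show u j = S j from Function.update_of_ne (ne_of_mem_erase hj) _ _]
            exact hε _ S i z
        _ = (m - 1) * ε := by simp [card_erase_of_mem, Nat.cast_sub hm]
  have hsplit : generalizationGap D ℓ u - generalizationGap D ℓ S =
      (risk D ℓ u - risk D ℓ S) - (∑ j, ℓ u (u j) - ∑ j, ℓ S (S j)) / m := by
    simp only [generalizationGap, empiricalRisk]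
    ring
  calc |generalizationGap D ℓ u - generalizationGap D ℓ S|
      ≤ |risk D ℓ u - risk D ℓ S| + |∑ j, ℓ u (u j) - ∑ j, ℓ S (S j)| / m := by
        rw [hsplit]
        refine (abs_sub _ _).trans_eq ?_
        rw [abs_div, abs_of_pos hm']
    _ ≤ ε + (B + (m - 1) * ε) / m := by gcongr
    _ = (B + (2 * m - 1) * ε) / m := by field_simp; ring

theorem ofReal_one_sub_le_measure_risk_le (hm : 0 < m) (hℓ : Measurable (Function.uncurry ℓ))
    (hℓB : ∀ S z, ℓ S z ∈ Set.Icc 0 B) (hε : ∀ z, HasBoundedDifferences (ℓ · z) ε)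
    {δ : ℝ} (hδ0 : 0 < δ) (hδ1 : δ ≤ 1) :
    ENNReal.ofReal (1 - δ) ≤ Measure.pi (fun _ => D) {S | risk D ℓ S ≤
      empiricalRisk ℓ S + ε + (B + (2 * m - 1) * ε) * √(log (1 / δ) / (2 * m))} := by
  obtain ⟨z₀⟩ := nonempty_of_isProbabilityMeasure D
  have hm' : (1 : ℝ) ≤ m := Nat.one_le_cast.2 hm
  have hB : 0 ≤ B := (hℓB (fun _ => z₀) z₀).1.trans (hℓB _ _).2
  have hε0 : 0 ≤ ε := (abs_nonneg _).trans (hε z₀ (fun _ => z₀) ⟨0, hm⟩ z₀)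
  have hC : 0 ≤ B + (2 * m - 1) * ε := add_nonneg hB (mul_nonneg (by linarith) hε0)
  set c : ℝ≥0 := ⟨(B + (2 * m - 1) * ε) / m, div_nonneg hC (by linarith)⟩
  have hgap_abs (S : Fin m → Z) : |generalizationGap D ℓ S| ≤ B :=
    abs_sub_le_of_nonneg_of_le (risk_mem_Icc (D := D) hℓB S).1 (risk_mem_Icc hℓB S).2
      (empiricalRisk_mem_Icc hm hℓB S).1 (empiricalRisk_mem_Icc hm hℓB S).2
  have hgap := (hasBoundedDifferences_generalizationGap (D := D) hm hℓ hℓB hε).hasSubgaussianMGF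
    (D := D) (c := c) (measurable_generalizationGap hℓ) hgap_abs
  have hdev : √(2 * ↑((m * (c / 2) ^ 2 : ℝ≥0)) * log (1 / δ)) =
      (B + (2 * m - 1) * ε) * √(log (1 / δ) / (2 * m)) := by
    have : 2 * ↑((m * (c / 2) ^ 2 : ℝ≥0)) * log (1 / δ) =
        (B + (2 * m - 1) * ε) ^ 2 * (log (1 / δ) / (2 * m)) := by
      have hc : (c : ℝ) = (B + (2 * m - 1) * ε) / m := rfl
      push_cast [hc]
      field_simp
    rw [this, sqrt_mul (sq_nonneg _), sqrt_sq hC]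
  refine (hgap.ofReal_one_sub_le_measure_le_sqrt_log hδ0 hδ1).trans (measure_mono fun S hS => ?_)
  have hmean := integral_generalizationGap_le (D := D) hm hℓ hℓB hε
  have hgapS : generalizationGap D ℓ S = risk D ℓ S - empiricalRisk ℓ S := rfl
  simp only [Set.mem_ofPred_eq, hdev] at hS ⊢
  linarith

end Stability

theorem List.ofFn_update {α : Type*} {m : ℕ} (S : Fin m → α) (i : Fin m) (a : α) :
    List.ofFn (Function.update S i a) = (List.ofFn S).set i a := by
  apply List.ext_getElem (by simp)
  intro j _ _
  simp [List.getElem_set, Function.update_apply, Fin.ext_iff, eq_comm]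

section SampleLoss

variable {Z Y : Type*} {n : ℕ} {G : List Z → Z → Fin n → ℝ} {y : Z → Fin n → Y}
  {c : ℝ → Y → ℝ} {τ γ Δ : ℝ}

/-- The paper's `L_τ(G_S, z)`; its `risk` and `empiricalRisk` are `n` times `R(G_S)` and
`R_e(G_S)`. -/
def sampleLoss (G : List Z → Z → Fin n → ℝ) (y : Z → Fin n → Y) (c : ℝ → Y → ℝ) {m : ℕ}
    (S : Fin m → Z) (z : Z) : ℝ :=
  ∑ k, c (G (List.ofFn S) z k) (y z k)

lemma sampleLoss_mem_Icc (hbound : ∀ S z k, 0 ≤ c (G S z k) (y z k) ∧ c (G S z k) (y z k) ≤ γ)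
    {m : ℕ} (S : Fin m → Z) (z : Z) : sampleLoss G y c S z ∈ Set.Icc 0 (n * γ) :=
  ⟨sum_nonneg fun k _ => (hbound _ _ _).1,
    (sum_le_sum fun k _ => (hbound _ _ _).2).trans_eq (by simp)⟩

lemma abs_ofFn_update_sub_le (hstab : ∀ S i z k, |G S z k - G (S.eraseIdx i) z k| ≤ Δ)
    {m : ℕ} (S : Fin m → Z) (i : Fin m) (z' z : Z) (k : Fin n) :
    |G (List.ofFn (Function.update S i z')) z k - G (List.ofFn S) z k| ≤ 2 * Δ := by
  have hreplaced := hstab (List.ofFn (Function.update S i z')) i z k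
  rw [List.ofFn_update, List.eraseIdx_set_eq] at hreplaced
  rw [List.ofFn_update, two_mul]
  exact (abs_sub_le _ _ _).trans
    (add_le_add hreplaced ((abs_sub_comm _ _).trans_le (hstab (List.ofFn S) i z k)))

lemma hasBoundedDifferences_sampleLoss (hτ : 0 ≤ τ)
    (hsmooth : ∀ a b t, |c a t - c b t| ≤ τ * |a - b|)
    (hstab : ∀ S i z k, |G S z k - G (S.eraseIdx i) z k| ≤ Δ) {m : ℕ} (z : Z) :
    HasBoundedDifferences (fun S : Fin m → Z => sampleLoss G y c S z) (2 * n * τ * Δ) := by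
  intro S i z'
  simp only [sampleLoss]
  rw [← sum_sub_distrib]
  calc |∑ k, (c (G (List.ofFn (Function.update S i z')) z k) (y z k) -
          c (G (List.ofFn S) z k) (y z k))|
      ≤ ∑ k : Fin n, τ * (2 * Δ) :=
        (abs_sum_le_sum_abs _ _).trans <| sum_le_sum fun k _ => (hsmooth _ _ _).trans <|
          mul_le_mul_of_nonneg_left (abs_ofFn_update_sub_le hstab S i z' z k) hτ
    _ = 2 * n * τ * Δ := by
        rw [sum_const, card_univ, Fintype.card_fin, nsmul_eq_mul]
        ring

end SampleLoss

theorem generalization_vs_stability_general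
    {Z Ytag : Type*} [MeasurableSpace Z] (D : Measure Z) [IsProbabilityMeasure D]
    (m n : ℕ) (hm : 0 < m) (hn : 0 < n)
    (G : List Z → Z → Fin n → ℝ)   -- learning algorithm on training lists
    (y : Z → Fin n → Ytag)          -- gold tags of a sample
    (c : ℝ → Ytag → ℝ) (τ γ Δ : ℝ) (hτ : 0 ≤ τ)
    (hsmooth : ∀ (a b : ℝ) (t : Ytag), |c a t - c b t| ≤ τ * |a - b|)
    (hbound : ∀ (S' : List Z) (z : Z) (k : Fin n),
      0 ≤ c (G S' z k) (y z k) ∧ c (G S' z k) (y z k) ≤ γ)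
    (hstab : ∀ (S' : List Z) (i : ℕ) (z : Z) (k : Fin n),
      |G S' z k - G (S'.eraseIdx i) z k| ≤ Δ)
    -- measurability of the loss as a function of the training set and the sample
    (hmeas : Measurable
      (fun p : (Fin m → Z) × Z =>
        ∑ k : Fin n, c (G (List.ofFn p.1) p.2 k) (y p.2 k)))
    (δ : ℝ) (hδ0 : 0 < δ) (hδ1 : δ < 1) :
    ENNReal.ofReal (1 - δ) ≤
      (Measure.pi fun _ : Fin m => D)
        {S : Fin m → Z |
          (∫ z, ∑ k : Fin n, c (G (List.ofFn S) z k) (y z k) ∂D) / (n : ℝ)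
            ≤ (1 / ((m : ℝ) * n)) *
                (∑ j : Fin m, ∑ k : Fin n,
                  c (G (List.ofFn S) (S j) k) (y (S j) k))
              + 2 * τ * Δ
              + ((4 * (m : ℝ) - 2) * τ * Δ + γ) *
                  Real.sqrt (Real.log (1 / δ) / (2 * m))} := by
  have hgen := ofReal_one_sub_le_measure_risk_le (D := D) hm (ℓ := sampleLoss G y c) hmeas
    (sampleLoss_mem_Icc hbound) (hasBoundedDifferences_sampleLoss hτ hsmooth hstab) hδ0 hδ1.le
  refine hgen.trans (measure_mono fun S hS => ?_)
  have hm' : (0 : ℝ) < m := Nat.cast_pos.2 hm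
  have hn' : (0 : ℝ) < n := Nat.cast_pos.2 hn
  simp only [Set.mem_ofPred_eq, risk, empiricalRisk, sampleLoss] at hS ⊢
  rw [div_le_iff₀ hn']
  refine hS.trans_eq ?_
  field_simp
  ring

/-- **Generalization vs. stability (Theorem 2).**
Let `G` be a symmetric real-valued structured prediction algorithm trained on
`m` i.i.d. samples from `D`, with τ-smooth point-wise cost, point-wise loss in
`[0, γ]`, and removal-based function stability `Δ̄` holding for every training
set (including replaced ones).  Then for any `δ ∈ (0,1)`, with probability at
least `1 − δ` over the draw of the training set `S`,
`R(f) ≤ R_e(f) + 2τΔ̄ + ((4m − 2)τΔ̄ + γ)√(ln(1/δ)/(2m))` where `f = G_S`. -/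
theorem generalization_vs_stability
    {Z Ytag : Type*} [MeasurableSpace Z] (D : Measure Z) [IsProbabilityMeasure D]
    (m n : ℕ) (hm : 0 < m) (hn : 0 < n)
    (G : List Z → Z → Fin n → ℝ)   -- learning algorithm on training lists
    (y : Z → Fin n → Ytag)          -- gold tags of a sample
    (c : ℝ → Ytag → ℝ) (τ γ Δ : ℝ) (hτ : 0 ≤ τ)
    (hsym : ∀ S S' : List Z, S.Perm S' → G S = G S')
    (hsmooth : ∀ (a b : ℝ) (t : Ytag), |c a t - c b t| ≤ τ * |a - b|)
    (hbound : ∀ (S' : List Z) (z : Z) (k : Fin n),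
      0 ≤ c (G S' z k) (y z k) ∧ c (G S' z k) (y z k) ≤ γ)
    (hstab : ∀ (S' : List Z) (i : ℕ) (z : Z) (k : Fin n),
      |G S' z k - G (S'.eraseIdx i) z k| ≤ Δ)
    -- measurability of the loss as a function of the training set and the sample
    (hmeas : Measurable
      (fun p : (Fin m → Z) × Z =>
        ∑ k : Fin n, c (G (List.ofFn p.1) p.2 k) (y p.2 k)))
    (δ : ℝ) (hδ0 : 0 < δ) (hδ1 : δ < 1) :
    ENNReal.ofReal (1 - δ) ≤
      (Measure.pi fun _ : Fin m => D)
        {S : Fin m → Z |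
          (∫ z, ∑ k : Fin n, c (G (List.ofFn S) z k) (y z k) ∂D) / (n : ℝ)
            ≤ (1 / ((m : ℝ) * n)) *
                (∑ j : Fin m, ∑ k : Fin n,
                  c (G (List.ofFn S) (S j) k) (y (S j) k))
              + 2 * τ * Δ
              + ((4 * (m : ℝ) - 2) * τ * Δ + γ) *
                  Real.sqrt (Real.log (1 / δ) / (2 * m))} :=
  generalization_vs_stability_general D m n hm hn G y c τ γ Δ hτ hsmooth hbound hstab hmeas δ hδ0
    hδ1
end
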